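/- Fix (q, v, p) ∈ ℝᵐ × ℝᵐ × ℝᵐ and a linear subspace C ⊆ ℝᵐ. Let Δ := C × ℝᵐ × ℝᵐ ⊆ ℝ³ᵐ and let ω be the skew-symmetric bilinear form on ℝ³ᵐ given by ω((a, b, c), (a′, b′, c′)) = ⟨a, c′⟩ − ⟨a′, c⟩. Then ((q̇, v̇, ṗ), (α, β, u)) ∈ D(ω, Δ) if and only if: q̇ ∈ C, β = 0, u = q̇, and ⟨ṗ + α, w⟩ = 0 for all w ∈ C. -/
import Mathlib


open scoped RealInnerProductSpace

noncomputable section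

/-- `ℝᵐ` with the Euclidean inner product. -/
abbrev E (m : ℕ) : Type := EuclideanSpace ℝ (Fin m)

/-- The Dirac structure induced by a (skew-symmetric bilinear) form `ω` and a
(linear subspace) `Δ`, covectors being identified with vectors via the pairing `pair`
(the Euclidean inner product). -/
def Dirac {F : Type*} (pair ω : F → F → ℝ) (Δ : Set F) : Set (F × F) :=
  {p | p.1 ∈ Δ ∧ ∀ w ∈ Δ, pair p.2 w = ω p.1 w}

/-- Euclidean pairing on `ℝ³ᵐ = ℝᵐ × ℝᵐ × ℝᵐ`. -/
def pair3 {m : ℕ} (ζ w : E m × E m × E m) : ℝ :=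
  ⟪ζ.1, w.1⟫ + ⟪ζ.2.1, w.2.1⟫ + ⟪ζ.2.2, w.2.2⟫

/-- Presymplectic form `ω((a,b,c),(a',b',c')) = ⟨a,c'⟩ − ⟨a',c⟩` on `ℝ³ᵐ`. -/
def omega3 {m : ℕ} (x y : E m × E m × E m) : ℝ :=
  ⟪x.1, y.2.2⟫ - ⟪y.1, x.2.2⟫

/-- local characterization of the Dirac structure on the Pontryagin
bundle induced by the canonical presymplectic form and `Δ = C × ℝᵐ × ℝᵐ`. -/
theorem statement2 {m : ℕ} (q v p : E m) (C : Submodule ℝ (E m))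
    (qdot vdot pdot α β u : E m) :
    ((qdot, vdot, pdot), (α, β, u)) ∈
      Dirac pair3 omega3 {w : E m × E m × E m | w.1 ∈ C} ↔
    (qdot ∈ C ∧ β = 0 ∧ u = qdot ∧ ∀ w ∈ C, ⟪pdot + α, w⟫ = 0) := by
  simp only [Dirac, pair3, omega3, Set.mem_setOf_eq]
  constructor
  · rintro ⟨hq, h⟩
    refine ⟨hq, ?_, ?_, ?_⟩
    · have hb : ∀ b : E m, ⟪β, b⟫ = 0 := by
        intro b
        have := h (0, b, 0) (by simp)
        simpa using this
      exact inner_self_eq_zero.mp (hb β)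
    · have hu : ∀ c : E m, ⟪u - qdot, c⟫ = 0 := by
        intro c
        have := h (0, 0, c) (by simp)
        simpa [inner_sub_left, sub_eq_zero] using this
      exact sub_eq_zero.mp (inner_self_eq_zero.mp (hu (u - qdot)))
    · intro w hw
      have := h (w, 0, 0) hw
      simp only [inner_zero_right, add_zero, inner_zero_left, sub_zero, zero_sub] at this
      rw [inner_add_left, this, real_inner_comm pdot w]
      ring
  · rintro ⟨hq, hβ, hu, hp⟩
    refine ⟨hq, fun w hw => ?_⟩
    have := hp w.1 hw
    rw [inner_add_left] at this
    subst hβ hu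
    simp only [inner_zero_left, add_zero]
    have h2 : ⟪w.1, pdot⟫ = ⟪pdot, w.1⟫ := real_inner_comm _ _
    linarith

end
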